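/- Let Φ: ℂ² → ℂ be Lebesgue-integrable and let κ ∈ SU(2). Then the twisted Fourier transform is equivariant for the right action of SU(2) on row vectors: for all (z₁, z₂) ∈ ℂ², (Φ ∘ ρ_κ)^^(z₁, z₂) = Φ^((z₁, z₂)·κ), where ρ_κ(u₁, u₂) = (u₁, u₂)·κ denotes right multiplication of the row vector (u₁, u₂) by the matrix κ, and ^ denotes the twisted Fourier transform. -/

import Mathlib

open MeasureTheory Real Complex

/-- The twisted Fourier transform on `ℂ²` (with respect to the self-dual Tate measure,
i.e. `4 ×` Lebesgue measure on `ℂ² ≅ ℝ⁴`):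
`Φ^(z₁,z₂) = 4 ∫ Φ(u₁,u₂) e^{-2πi(z₁u₂ - z₂u₁ + conj(z₁)conj(u₂) - conj(z₂)conj(u₁))} du`. -/
noncomputable def twistedFourier (Φ : ℂ × ℂ → ℂ) (z : ℂ × ℂ) : ℂ :=
  4 * ∫ u : ℂ × ℂ,
    Φ u * Complex.exp (-(2 * π * I) *
      (z.1 * u.2 - z.2 * u.1 +
        starRingEnd ℂ z.1 * starRingEnd ℂ u.2 - starRingEnd ℂ z.2 * starRingEnd ℂ u.1))

/-- Right multiplication of a row vector `(u₁, u₂) ∈ ℂ²` by a matrix `κ ∈ SU(2)`. -/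
def rowMulSU2 (κ : Matrix.specialUnitaryGroup (Fin 2) ℂ) (u : ℂ × ℂ) : ℂ × ℂ :=
  (u.1 * (κ : Matrix (Fin 2) (Fin 2) ℂ) 0 0 + u.2 * (κ : Matrix (Fin 2) (Fin 2) ℂ) 1 0,
   u.1 * (κ : Matrix (Fin 2) (Fin 2) ℂ) 0 1 + u.2 * (κ : Matrix (Fin 2) (Fin 2) ℂ) 1 1)

/-! Right multiplication by `κ ∈ SU(2)` is a `ℂ`-linear automorphism of `ℂ²` of determinant `1`,
so its determinant as an `ℝ`-linear map is `|det κ|² = 1` and it preserves Lebesgue measure.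
The phase of the twisted Fourier transform is `ω(z, u) + conj ω(z, u)` for the symplectic form
`ω(z, u) = z₁u₂ - z₂u₁`, and `ω(zκ, uκ) = det κ · ω(z, u) = ω(z, u)`. Substituting `u ↦ uκ` in the
integral defining `Φ^(zκ)` therefore gives `(Φ ∘ ρ_κ)^(z)`. -/

open scoped Matrix

theorem LinearMap.det_restrictScalars_real {E : Type*} [AddCommGroup E] [Module ℂ E]
    (f : E →ₗ[ℂ] E) : (f.restrictScalars ℝ).det = normSq f.det := by
  rw [LinearMap.det_restrictScalars, Algebra.norm_complex_apply]

section HaarMeasure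

variable {E : Type*} [NormedAddCommGroup E] [NormedSpace ℂ E] [FiniteDimensional ℂ E]
  [MeasurableSpace E] [BorelSpace E] (μ : Measure E) [μ.IsAddHaarMeasure]

theorem LinearEquiv.measurePreserving_of_norm_det_eq_one (f : E ≃ₗ[ℂ] E)
    (hf : ‖LinearMap.det (f : E →ₗ[ℂ] E)‖ = 1) : MeasurePreserving f μ μ := by
  have hdet : LinearMap.det ((f : E →ₗ[ℂ] E).restrictScalars ℝ) = 1 := by
    rw [LinearMap.det_restrictScalars_real, normSq_eq_norm_sq, hf, one_pow]
  refine ⟨f.toContinuousLinearEquiv.continuous.measurable, ?_⟩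
  have h := Measure.map_linearMap_addHaar_eq_smul_addHaar μ (hdet ▸ one_ne_zero)
  rwa [hdet, inv_one, abs_one, ENNReal.ofReal_one, one_smul] at h

theorem LinearEquiv.integral_comp_of_norm_det_eq_one {F : Type*} [NormedAddCommGroup F]
    [NormedSpace ℝ F] (f : E ≃ₗ[ℂ] E) (hf : ‖LinearMap.det (f : E →ₗ[ℂ] E)‖ = 1) (g : E → F) :
    ∫ x, g (f x) ∂μ = ∫ x, g x ∂μ :=
  (f.measurePreserving_of_norm_det_eq_one μ hf).integral_comp'
    (f := f.toContinuousLinearEquiv.toHomeomorph.toMeasurableEquiv) g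

end HaarMeasure

instance Prod.volume_isAddHaarMeasure {E F : Type*} [AddGroup E] [TopologicalSpace E]
    [MeasureSpace E] [MeasurableAdd E] [(volume : Measure E).IsAddHaarMeasure]
    [SFinite (volume : Measure E)] [AddGroup F] [TopologicalSpace F] [MeasureSpace F]
    [MeasurableAdd F] [(volume : Measure F).IsAddHaarMeasure] [SFinite (volume : Measure F)] :
    (volume : Measure (E × F)).IsAddHaarMeasure :=
  Measure.prod.instIsAddHaarMeasure volume volume

theorem Matrix.specialUnitaryGroup.det_coe {n α : Type*} [DecidableEq n] [Fintype n]
    [CommRing α] [StarRing α] (A : Matrix.specialUnitaryGroup n α) : (A : Matrix n n α).det = 1 :=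
  (Matrix.mem_specialUnitaryGroup_iff.mp A.prop).2

theorem Matrix.specialUnitaryGroup.det_fin_two (κ : Matrix.specialUnitaryGroup (Fin 2) ℂ) :
    (κ : Matrix (Fin 2) (Fin 2) ℂ) 0 0 * (κ : Matrix (Fin 2) (Fin 2) ℂ) 1 1
      - (κ : Matrix (Fin 2) (Fin 2) ℂ) 0 1 * (κ : Matrix (Fin 2) (Fin 2) ℂ) 1 0 = 1 := by
  rw [← Matrix.det_fin_two, det_coe]

noncomputable def rowMulSU2LinearEquiv (κ : Matrix.specialUnitaryGroup (Fin 2) ℂ) :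
    (ℂ × ℂ) ≃ₗ[ℂ] ℂ × ℂ :=
  Matrix.toLinearEquiv (Module.Basis.finTwoProd ℂ) (κ : Matrix (Fin 2) (Fin 2) ℂ)ᵀ
    (by rw [Matrix.det_transpose, Matrix.specialUnitaryGroup.det_coe]; exact isUnit_one)

theorem coe_rowMulSU2LinearEquiv (κ : Matrix.specialUnitaryGroup (Fin 2) ℂ) :
    ⇑(rowMulSU2LinearEquiv κ) = rowMulSU2 κ := by
  ext u <;> simp [rowMulSU2LinearEquiv, rowMulSU2, Matrix.toLin_apply, Matrix.mulVec, dotProduct,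
    mul_comm]

theorem det_rowMulSU2LinearEquiv (κ : Matrix.specialUnitaryGroup (Fin 2) ℂ) :
    LinearMap.det (rowMulSU2LinearEquiv κ : (ℂ × ℂ) →ₗ[ℂ] ℂ × ℂ) = 1 := by
  change LinearMap.det (Matrix.toLin (Module.Basis.finTwoProd ℂ) (Module.Basis.finTwoProd ℂ) _) = 1
  rw [LinearMap.det_toLin, Matrix.det_transpose, Matrix.specialUnitaryGroup.det_coe]

def symplecticForm {R : Type*} [CommRing R] (z u : R × R) : R := z.1 * u.2 - z.2 * u.1

theorem symplecticForm_rowMulSU2 (κ : Matrix.specialUnitaryGroup (Fin 2) ℂ) (z u : ℂ × ℂ) :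
    symplecticForm (rowMulSU2 κ z) (rowMulSU2 κ u) = symplecticForm z u := by
  simp only [symplecticForm, rowMulSU2]
  linear_combination (z.1 * u.2 - z.2 * u.1) * Matrix.specialUnitaryGroup.det_fin_two κ

theorem twistedFourier_eq_integral_symplecticForm (Φ : ℂ × ℂ → ℂ) (z : ℂ × ℂ) :
    twistedFourier Φ z = 4 * ∫ u, Φ u *
      Complex.exp (-(2 * π * I) * (symplecticForm z u + starRingEnd ℂ (symplecticForm z u))) := by
  simp only [twistedFourier, symplecticForm, map_sub, map_mul, add_sub_assoc]

theorem twistedFourier_comp_rowMulSU2_general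
    (Φ : ℂ × ℂ → ℂ)
    (κ : Matrix.specialUnitaryGroup (Fin 2) ℂ) (z : ℂ × ℂ) :
    twistedFourier (fun u => Φ (rowMulSU2 κ u)) z = twistedFourier Φ (rowMulSU2 κ z) := by
  rw [twistedFourier_eq_integral_symplecticForm, twistedFourier_eq_integral_symplecticForm]
  conv_rhs => rw [← (rowMulSU2LinearEquiv κ).integral_comp_of_norm_det_eq_one volume
      (by rw [det_rowMulSU2LinearEquiv, norm_one])]
  simp_rw [coe_rowMulSU2LinearEquiv, symplecticForm_rowMulSU2]

/-- `SU(2)`-equivariance of the twisted Fourier transform on `ℂ²`: for integrable `Φ` and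
`κ ∈ SU(2)`, `(Φ ∘ ρ_κ)^(z) = Φ^(z·κ)` where `ρ_κ` is right multiplication by `κ`. -/
theorem twistedFourier_comp_rowMulSU2
    (Φ : ℂ × ℂ → ℂ) (hΦ : Integrable Φ (volume : Measure (ℂ × ℂ)))
    (κ : Matrix.specialUnitaryGroup (Fin 2) ℂ) (z : ℂ × ℂ) :
    twistedFourier (fun u => Φ (rowMulSU2 κ u)) z = twistedFourier Φ (rowMulSU2 κ z) :=
  twistedFourier_comp_rowMulSU2_general Φ κ z
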